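/- arXiv:1211.1940 — 3 statements merged into one kernel-verified Lean document; each statement's English description precedes it below -/
import Mathlib

section
/- Let f ∈ ℝ[x₁,…,xₙ], let h = (h₁,…,h_{m₁}), g = (g₁,…,g_{m₂}) be tuples of polynomials with feasible set K, and set h^{sq} := h₁² + ⋯ + h_{m₁}². Suppose I(K) = I(V_ℝ(h)). Then the Lasserre sequence {f_k} (using the equalities h) has finite convergence to f_min if and only if the sequence {f_k^{sq}} for the single-equality problem (minimize f subject to h^{sq}(x) = 0 and g(x) ≥ 0) has finite convergence to f_min. -/
open MvPolynomial Pointwise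

/-- A polynomial is a sum of squares. -/
def IsSOS {n : ℕ} (p : MvPolynomial (Fin n) ℝ) : Prop :=
  ∃ (m : ℕ) (q : Fin m → MvPolynomial (Fin n) ℝ), p = ∑ i, q i ^ 2

/-- The `2k`-th truncated ideal generated by the tuple `h`. -/
def truncIdeal {n m : ℕ} (h : Fin m → MvPolynomial (Fin n) ℝ) (k : ℕ) :
    Set (MvPolynomial (Fin n) ℝ) :=
  {p | ∃ φ : Fin m → MvPolynomial (Fin n) ℝ,
    (∀ i, (φ i * h i).totalDegree ≤ 2 * k) ∧ p = ∑ i, φ i * h i}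

/-- The `k`-th truncated quadratic module generated by the tuple `g` (with `g₀ = 1`). -/
def truncQM {n m : ℕ} (g : Fin m → MvPolynomial (Fin n) ℝ) (k : ℕ) :
    Set (MvPolynomial (Fin n) ℝ) :=
  {p | ∃ σ : Fin (m + 1) → MvPolynomial (Fin n) ℝ,
    (∀ j, IsSOS (σ j) ∧
      (σ j * (Fin.cons 1 g : Fin (m + 1) → MvPolynomial (Fin n) ℝ) j).totalDegree ≤ 2 * k) ∧
    p = ∑ j, σ j * (Fin.cons 1 g : Fin (m + 1) → MvPolynomial (Fin n) ℝ) j}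

/-- The feasible set `K` of the problem `h = 0, g ≥ 0`. -/
def feasSet {n m₁ m₂ : ℕ} (h : Fin m₁ → MvPolynomial (Fin n) ℝ)
    (g : Fin m₂ → MvPolynomial (Fin n) ℝ) : Set (Fin n → ℝ) :=
  {x | (∀ i, eval x (h i) = 0) ∧ ∀ j, 0 ≤ eval x (g j)}

/-- The real variety `V_ℝ(h)`. -/
def realVariety {n m : ℕ} (h : Fin m → MvPolynomial (Fin n) ℝ) : Set (Fin n → ℝ) :=
  {x | ∀ i, eval x (h i) = 0}

/-- The vanishing ideal `I(S)` of a set `S ⊆ ℝⁿ`. -/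
def vanishIdeal {n : ℕ} (S : Set (Fin n → ℝ)) : Set (MvPolynomial (Fin n) ℝ) :=
  {p | ∀ u ∈ S, eval u p = 0}

/-- The `k`-th Lasserre bound `f_k` (an extended real). -/
noncomputable def lasserreBound {n m₁ m₂ : ℕ} (f : MvPolynomial (Fin n) ℝ)
    (h : Fin m₁ → MvPolynomial (Fin n) ℝ) (g : Fin m₂ → MvPolynomial (Fin n) ℝ)
    (k : ℕ) : EReal :=
  sSup {γ : EReal | ∃ r : ℝ, γ = (r : EReal) ∧ f - C r ∈ truncIdeal h k + truncQM g k}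

/-- `f_min`, the infimum of `f` over `K`, as an extended real (`⊤` if `K = ∅`). -/
noncomputable def fMin {n : ℕ} (f : MvPolynomial (Fin n) ℝ) (K : Set (Fin n → ℝ)) : EReal :=
  ⨅ x ∈ K, (eval x f : EReal)

section Aux

open Finset

variable {n : ℕ}

lemma isSOS_zero : IsSOS (0 : MvPolynomial (Fin n) ℝ) :=
  ⟨0, fun _ => 0, by simp⟩

lemma isSOS_sq (q : MvPolynomial (Fin n) ℝ) : IsSOS (q ^ 2) :=
  ⟨1, fun _ => q, by simp⟩

lemma isSOS_add {p q : MvPolynomial (Fin n) ℝ} (hp : IsSOS p) (hq : IsSOS q) :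
    IsSOS (p + q) := by
  obtain ⟨a, u, rfl⟩ := hp
  obtain ⟨b, v, rfl⟩ := hq
  refine ⟨a + b, Fin.append u v, ?_⟩
  rw [Fin.sum_univ_add]
  simp [Fin.append]

lemma isSOS_sum {ι : Type*} (s : Finset ι) (f : ι → MvPolynomial (Fin n) ℝ)
    (hf : ∀ i ∈ s, IsSOS (f i)) : IsSOS (∑ i ∈ s, f i) :=
  Finset.sum_induction f IsSOS (fun _ _ => isSOS_add) isSOS_zero hf

lemma eval_nonneg_of_isSOS {p : MvPolynomial (Fin n) ℝ} (hp : IsSOS p)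
    (x : Fin n → ℝ) : 0 ≤ eval x p := by
  obtain ⟨m, q, rfl⟩ := hp
  simp only [map_sum, map_pow]
  exact Finset.sum_nonneg fun i _ => sq_nonneg _

lemma finsupp_degree_eq_sum (d : Fin n →₀ ℕ) : d.degree = d.sum fun _ e => e := by
  rw [Finsupp.sum]; rfl

lemma top_component_ne_zero {p : MvPolynomial (Fin n) ℝ} (hp : p ≠ 0) :
    homogeneousComponent p.totalDegree p ≠ 0 := by
  obtain ⟨d, hd, hdeg⟩ := Finset.exists_mem_eq_sup p.support
    (by rwa [Finset.nonempty_iff_ne_empty, Ne, support_eq_empty]) (fun s => s.sum fun _ e => e)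
  have hdd : d.degree = p.totalDegree := by
    rw [finsupp_degree_eq_sum, totalDegree, hdeg]
  intro hzero
  have := coeff_homogeneousComponent (R := ℝ) p.totalDegree p d
  rw [hzero, if_pos hdd] at this
  exact (mem_support_iff.mp hd) this.symm

lemma totalDegree_residual_lt (p : MvPolynomial (Fin n) ℝ)
    (h : p - homogeneousComponent p.totalDegree p ≠ 0) :
    (p - homogeneousComponent p.totalDegree p).totalDegree < p.totalDegree := by
  have hcoeff : ∀ d : Fin n →₀ ℕ, p.totalDegree ≤ d.degree →
      coeff d (p - homogeneousComponent p.totalDegree p) = 0 := by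
    intro d hdle
    rw [coeff_sub, coeff_homogeneousComponent]
    rcases eq_or_lt_of_le hdle with heq | hlt
    · rw [if_pos heq.symm, sub_self]
    · rw [if_neg (by omega), coeff_eq_zero_of_totalDegree_lt
        (by rwa [show (∑ i ∈ d.support, d i) = d.degree from rfl]), sub_zero]
  have hDpos : 0 < p.totalDegree := by
    rcases Nat.eq_zero_or_pos p.totalDegree with h0 | h0
    · exact absurd (by ext d; simpa using hcoeff d (by omega)) h
    · exact h0
  rw [totalDegree, Finset.sup_lt_iff (by simpa using hDpos)]
  intro b hb
  rw [← finsupp_degree_eq_sum]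
  by_contra hc
  push_neg at hc
  exact mem_support_iff.mp hb (hcoeff b hc)

lemma totalDegree_mul_eq_real {p q : MvPolynomial (Fin n) ℝ} (hp : p ≠ 0) (hq : q ≠ 0) :
    (p * q).totalDegree = p.totalDegree + q.totalDegree := by
  refine le_antisymm (totalDegree_mul p q) ?_
  have hPh := homogeneousComponent_isHomogeneous p.totalDegree p
  have hQh := homogeneousComponent_isHomogeneous q.totalDegree q
  have hPQ := hPh.mul hQh
  have hPne := top_component_ne_zero hp
  have hQne := top_component_ne_zero hq
  have hdecomp : p * q = homogeneousComponent p.totalDegree p * homogeneousComponent q.totalDegree q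
      + (homogeneousComponent p.totalDegree p * (q - homogeneousComponent q.totalDegree q)
        + (p - homogeneousComponent p.totalDegree p) * q) := by ring
  have hlow : homogeneousComponent (p.totalDegree + q.totalDegree)
      (homogeneousComponent p.totalDegree p * (q - homogeneousComponent q.totalDegree q)) = 0 := by
    rcases eq_or_ne (q - homogeneousComponent q.totalDegree q) 0 with hz | hzne
    · rw [hz, mul_zero]; simp
    · apply homogeneousComponent_eq_zero
      calc _ ≤ (homogeneousComponent p.totalDegree p).totalDegree
            + (q - homogeneousComponent q.totalDegree q).totalDegree := totalDegree_mul _ _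
        _ < p.totalDegree + q.totalDegree := by
            have h1 := totalDegree_residual_lt q hzne
            have h2 := hPh.totalDegree_le
            omega
  have hlow2 : homogeneousComponent (p.totalDegree + q.totalDegree)
      ((p - homogeneousComponent p.totalDegree p) * q) = 0 := by
    rcases eq_or_ne (p - homogeneousComponent p.totalDegree p) 0 with hz | hzne
    · rw [hz, zero_mul]; simp
    · apply homogeneousComponent_eq_zero
      calc _ ≤ (p - homogeneousComponent p.totalDegree p).totalDegree + q.totalDegree :=
            totalDegree_mul _ _
        _ < p.totalDegree + q.totalDegree := by
            have h1 := totalDegree_residual_lt p hzne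
            omega
  have hcomp : homogeneousComponent (p.totalDegree + q.totalDegree) (p * q)
      = homogeneousComponent p.totalDegree p * homogeneousComponent q.totalDegree q := by
    rw [hdecomp, map_add, map_add,
      homogeneousComponent_of_mem ((mem_homogeneousSubmodule _ _).mpr hPQ), if_pos rfl,
      hlow, hlow2, add_zero, add_zero]
  by_contra hc
  push_neg at hc
  have := homogeneousComponent_eq_zero (n := p.totalDegree + q.totalDegree) (φ := p * q) hc
  rw [hcomp] at this
  exact mul_ne_zero hPne hQne this

lemma lagrange_identity {R : Type*} [CommRing R] {m : ℕ} (a b : Fin m → R) :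
    2 * ((∑ i, a i ^ 2) * (∑ i, b i ^ 2) - (∑ i, a i * b i) ^ 2)
      = ∑ i, ∑ j, (a i * b j - a j * b i) ^ 2 := by
  have expand : ∀ i j : Fin m, (a i * b j - a j * b i) ^ 2
      = a i ^ 2 * b j ^ 2 + a j ^ 2 * b i ^ 2 - (a i * b i) * (a j * b j) * 2 := by
    intro i j; ring
  have h1 : ∑ i, ∑ j, (a i * b j - a j * b i) ^ 2
      = ((∑ i, ∑ j, a i ^ 2 * b j ^ 2) + ∑ i : Fin m, ∑ j : Fin m, a j ^ 2 * b i ^ 2)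
        - ∑ i, ∑ j, (a i * b i) * (a j * b j) * 2 := by
    simp_rw [expand, Finset.sum_sub_distrib, Finset.sum_add_distrib]
  have e1 : (∑ i, ∑ j, a i ^ 2 * b j ^ 2) = (∑ i, a i ^ 2) * (∑ j, b j ^ 2) :=
    (Finset.sum_mul_sum _ _ _ _).symm
  have e2 : (∑ i : Fin m, ∑ j : Fin m, a j ^ 2 * b i ^ 2) = (∑ i, a i ^ 2) * (∑ j, b j ^ 2) := by
    rw [Finset.sum_comm]; exact e1
  have e3 : (∑ i, ∑ j, (a i * b i) * (a j * b j) * 2)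
      = ((∑ i, a i * b i) * (∑ j, a j * b j)) * 2 := by
    rw [Finset.sum_mul_sum _ _ (fun i => a i * b i) (fun j => a j * b j), Finset.sum_mul]
    exact Finset.sum_congr rfl fun i _ => by rw [Finset.sum_mul]
  rw [h1, e1, e2, e3]; ring

end Aux

section Hierarchy

open Finset

variable {n m₁ m₂ : ℕ}

lemma truncIdeal_mono {m : ℕ} (h : Fin m → MvPolynomial (Fin n) ℝ) {k k' : ℕ} (hkk : k ≤ k') :
    truncIdeal h k ⊆ truncIdeal h k' := by
  rintro p ⟨φ, hφ, rfl⟩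
  exact ⟨φ, fun i => (hφ i).trans (by omega), rfl⟩

lemma truncQM_mono {m : ℕ} (g : Fin m → MvPolynomial (Fin n) ℝ) {k k' : ℕ} (hkk : k ≤ k') :
    truncQM g k ⊆ truncQM g k' := by
  rintro p ⟨σ, hσ, rfl⟩
  exact ⟨σ, fun j => ⟨(hσ j).1, (hσ j).2.trans (by omega)⟩, rfl⟩

lemma truncQM_add_sos {m : ℕ} {g : Fin m → MvPolynomial (Fin n) ℝ} {k : ℕ}
    {q e : MvPolynomial (Fin n) ℝ} (hq : q ∈ truncQM g k) (he : IsSOS e)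
    (hdeg : e.totalDegree ≤ 2 * k) : q + e ∈ truncQM g k := by
  obtain ⟨σ, hσ, rfl⟩ := hq
  refine ⟨Fin.cons (σ 0 + e) (fun j => σ j.succ), fun j => ?_, ?_⟩
  · refine Fin.cases ?_ (fun i => ?_) j
    · constructor
      · rw [Fin.cons_zero]
        exact isSOS_add (hσ 0).1 he
      · rw [Fin.cons_zero, Fin.cons_zero, mul_one]
        have h0 := (hσ 0).2
        rw [Fin.cons_zero, mul_one] at h0
        exact (totalDegree_add _ _).trans (max_le h0 hdeg)
    · rw [Fin.cons_succ, Fin.cons_succ]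
      have := hσ i.succ
      rwa [Fin.cons_succ] at this
  · rw [Fin.sum_univ_succ, Fin.sum_univ_succ]
    simp only [Fin.cons_zero, Fin.cons_succ, mul_one]
    ring

lemma eval_truncIdeal_eq_zero {m : ℕ} {h : Fin m → MvPolynomial (Fin n) ℝ} {k : ℕ}
    {p : MvPolynomial (Fin n) ℝ} (hp : p ∈ truncIdeal h k) {x : Fin n → ℝ}
    (hx : ∀ i, eval x (h i) = 0) : eval x p = 0 := by
  obtain ⟨φ, _, rfl⟩ := hp
  simp only [map_sum, map_mul]
  exact Finset.sum_eq_zero fun i _ => by rw [hx i, mul_zero]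

lemma eval_truncQM_nonneg {m : ℕ} {g : Fin m → MvPolynomial (Fin n) ℝ} {k : ℕ}
    {p : MvPolynomial (Fin n) ℝ} (hp : p ∈ truncQM g k) {x : Fin n → ℝ}
    (hx : ∀ j, 0 ≤ eval x (g j)) : 0 ≤ eval x p := by
  obtain ⟨σ, hσ, rfl⟩ := hp
  simp only [map_sum, map_mul]
  refine Finset.sum_nonneg fun j _ => mul_nonneg (eval_nonneg_of_isSOS (hσ j).1 x) ?_
  refine Fin.cases ?_ (fun i => ?_) j
  · simp
  · rw [Fin.cons_succ]; exact hx i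

lemma lasserreBound_le_fMin {m : ℕ} (f : MvPolynomial (Fin n) ℝ)
    (h : Fin m → MvPolynomial (Fin n) ℝ) (g : Fin m₂ → MvPolynomial (Fin n) ℝ) (k : ℕ) :
    lasserreBound f h g k ≤ fMin f (feasSet h g) := by
  refine sSup_le ?_
  rintro γ ⟨r, rfl, hmem⟩
  rw [Set.mem_add] at hmem
  obtain ⟨P, hP, Q, hQ, hPQ⟩ := hmem
  refine le_iInf₂ fun x hx => ?_
  rw [EReal.coe_le_coe_iff]
  have := congrArg (eval x) hPQ
  rw [map_add, map_sub, eval_C, eval_truncIdeal_eq_zero hP hx.1, zero_add] at this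
  have hQx := eval_truncQM_nonneg hQ hx.2
  linarith [this ▸ hQx]

lemma feasSet_sq (h : Fin m₁ → MvPolynomial (Fin n) ℝ) (g : Fin m₂ → MvPolynomial (Fin n) ℝ) :
    feasSet (fun _ : Fin 1 => ∑ i, h i ^ 2) g = feasSet h g := by
  ext x
  simp only [feasSet, Set.mem_setOf_eq, and_congr_left_iff]
  intro _
  constructor
  · intro hx i
    have h0 := hx 0
    rw [map_sum] at h0
    simp only [map_pow] at h0
    have := (Finset.sum_eq_zero_iff_of_nonneg (fun j _ => sq_nonneg (eval x (h j)))).mp h0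
      i (Finset.mem_univ i)
    exact (pow_eq_zero_iff two_ne_zero).mp this
  · intro hx i
    rw [map_sum]
    exact Finset.sum_eq_zero fun j _ => by rw [map_pow, hx j, zero_pow two_ne_zero]

end Hierarchy

section Core

open Finset

variable {n m₁ m₂ : ℕ}

/-- degree bound constant for the tuple `h` -/
noncomputable def hDeg {n m : ℕ} (h : Fin m → MvPolynomial (Fin n) ℝ) : ℕ :=
  Finset.univ.sup fun i => (h i).totalDegree

lemma hDeg_le {m : ℕ} (h : Fin m → MvPolynomial (Fin n) ℝ) (i : Fin m) :
    (h i).totalDegree ≤ hDeg h :=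
  Finset.le_sup (f := fun i => (h i).totalDegree) (Finset.mem_univ i)

lemma hsq_deg_le {m : ℕ} (h : Fin m → MvPolynomial (Fin n) ℝ) :
    (∑ i, h i ^ 2).totalDegree ≤ 2 * hDeg h := by
  refine (totalDegree_finset_sum _ _).trans (Finset.sup_le fun i _ => ?_)
  calc (h i ^ 2).totalDegree ≤ 2 * (h i).totalDegree := totalDegree_pow _ _
    _ ≤ 2 * hDeg h := by have := hDeg_le h i; omega

lemma core_backward {f : MvPolynomial (Fin n) ℝ} {h : Fin m₁ → MvPolynomial (Fin n) ℝ}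
    {g : Fin m₂ → MvPolynomial (Fin n) ℝ} {k : ℕ} {r : ℝ}
    (hmem : f - C r ∈ truncIdeal (fun _ : Fin 1 => ∑ i, h i ^ 2) k + truncQM g k) :
    f - C r ∈ truncIdeal h (k + hDeg h) + truncQM g (k + hDeg h) := by
  rw [Set.mem_add] at hmem
  obtain ⟨P, hP, Q, hQ, hPQ⟩ := hmem
  obtain ⟨φ, hφdeg, rfl⟩ := hP
  rw [← hPQ]
  refine Set.add_mem_add ?_ (truncQM_mono g (by omega) hQ)
  rw [Fin.sum_univ_one]
  rcases eq_or_ne (φ 0) 0 with h0 | h0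
  · exact ⟨fun _ => 0, by simp, by simp [h0]⟩
  rcases eq_or_ne (∑ i, h i ^ 2) 0 with hs | hs
  · exact ⟨fun _ => 0, by simp, by simp [hs]⟩
  have hφ0 : (φ 0).totalDegree ≤ 2 * k := by
    have hd := hφdeg 0
    rw [totalDegree_mul_eq_real h0 hs] at hd
    omega
  refine ⟨fun i => φ 0 * h i, fun i => ?_, ?_⟩
  · calc (φ 0 * h i * h i).totalDegree ≤ (φ 0 * h i).totalDegree + (h i).totalDegree :=
        totalDegree_mul _ _
      _ ≤ (φ 0).totalDegree + (h i).totalDegree + (h i).totalDegree := by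
          have := totalDegree_mul (φ 0) (h i); omega
      _ ≤ 2 * (k + hDeg h) := by have := hDeg_le h i; omega
  · rw [Finset.mul_sum]
    exact Finset.sum_congr rfl fun i _ => by ring

lemma core_forward {f : MvPolynomial (Fin n) ℝ} {h : Fin m₁ → MvPolynomial (Fin n) ℝ}
    {g : Fin m₂ → MvPolynomial (Fin n) ℝ} {k : ℕ} {r' ε : ℝ} (hε : 0 < ε)
    (hmem : f - C r' ∈ truncIdeal h k + truncQM g k) :
    f - C (r' - ε) ∈ truncIdeal (fun _ : Fin 1 => ∑ i, h i ^ 2) (2 * k + hDeg h)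
      + truncQM g (2 * k + hDeg h) := by
  rw [Set.mem_add] at hmem
  obtain ⟨P, hP, Q, hQ, hPQ⟩ := hmem
  obtain ⟨φ, hφdeg, rfl⟩ := hP
  set d := hDeg h with hd
  -- normalize the multipliers
  set φ' : Fin m₁ → MvPolynomial (Fin n) ℝ := fun i => if h i = 0 then 0 else φ i with hφ'
  have hφ'eq : ∀ i, φ' i * h i = φ i * h i := by
    intro i
    by_cases hi : h i = 0
    · simp [hφ', hi]
    · simp [hφ', hi]
  have hφ'deg : ∀ i, (φ' i).totalDegree ≤ 2 * k := by
    intro i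
    by_cases hi : h i = 0
    · simp [hφ', hi]
    rcases eq_or_ne (φ i) 0 with h0 | h0
    · simp [hφ', hi, h0]
    have := hφdeg i
    rw [totalDegree_mul_eq_real h0 hi] at this
    simp only [hφ', if_neg hi]
    omega
  set P : MvPolynomial (Fin n) ℝ := ∑ i, φ i * h i with hPdef
  have hPeq : P = ∑ i, φ' i * h i := (Finset.sum_congr rfl fun i _ => (hφ'eq i).symm)
  have hPdeg : P.totalDegree ≤ 2 * k :=
    totalDegree_finsetSum_le fun i _ => hφdeg i
  set Λ : MvPolynomial (Fin n) ℝ := ∑ i, φ' i ^ 2 with hΛ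
  have hΛdeg : Λ.totalDegree ≤ 4 * k := by
    refine totalDegree_finsetSum_le fun i _ => ?_
    calc (φ' i ^ 2).totalDegree ≤ 2 * (φ' i).totalDegree := totalDegree_pow _ _
      _ ≤ 4 * k := by have := hφ'deg i; omega
  set hsq : MvPolynomial (Fin n) ℝ := ∑ i, h i ^ 2 with hhsq
  have hsqdeg : hsq.totalDegree ≤ 2 * d := hsq_deg_le h
  -- real constants
  have hεne : ε ≠ 0 := ne_of_gt hε
  have hsne : Real.sqrt ε ≠ 0 := by
    simp [Real.sqrt_ne_zero', hε]
  set b : ℝ := (2 * Real.sqrt ε)⁻¹ with hb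
  set c : ℝ := Real.sqrt ε with hc
  set e₀ : ℝ := Real.sqrt ((8 * ε)⁻¹) with he₀
  have hc2 : c ^ 2 = ε := Real.sq_sqrt hε.le
  have hb2 : b ^ 2 = (4 * ε)⁻¹ := by
    have h4 : (2 * c) ^ 2 = 4 * ε := by rw [mul_pow, hc2]; norm_num
    rw [hb, inv_pow, h4]
  have hbc : 2 * (b * c) = 1 := by
    rw [hb, hc]
    field_simp
  have he02 : e₀ ^ 2 = (8 * ε)⁻¹ := Real.sq_sqrt (by positivity)
  -- the SOS certificate pieces
  set sq1 : MvPolynomial (Fin n) ℝ := (C b * P + C c) ^ 2 with hsq1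
  set S : MvPolynomial (Fin n) ℝ :=
    ∑ i, ∑ j, (C e₀ * (φ' i * h j - φ' j * h i)) ^ 2 with hS
  set ψ : MvPolynomial (Fin n) ℝ := C (-(4 * ε)⁻¹) * Λ with hψ
  -- Lagrange identity
  have hlag : 2 * (Λ * hsq - P ^ 2) = ∑ i, ∑ j, (φ' i * h j - φ' j * h i) ^ 2 := by
    rw [hPeq]
    exact lagrange_identity φ' h
  have hSval : S = C ((8 * ε)⁻¹) * (2 * (Λ * hsq - P ^ 2)) := by
    rw [hS, hlag]
    simp_rw [mul_pow, ← map_pow, he02, Finset.mul_sum]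
  -- key identity
  have hkey : ψ * hsq + (sq1 + S) = P + C ε := by
    have hCb2 : (C b : MvPolynomial (Fin n) ℝ) ^ 2 = C ((4 * ε)⁻¹) := by
      rw [← map_pow, hb2]
    have hCc2 : (C c : MvPolynomial (Fin n) ℝ) ^ 2 = C ε := by
      rw [← map_pow, hc2]
    have hCbc : (2 : MvPolynomial (Fin n) ℝ) * (C b * C c) = 1 := by
      rw [← map_mul, ← map_ofNat C 2, ← map_mul, hbc, map_one]
    have hexp : sq1 = C ((4 * ε)⁻¹) * P ^ 2 + P + C ε := by
      rw [hsq1, show (C b * P + C c) ^ 2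
          = (C b) ^ 2 * P ^ 2 + (2 * (C b * C c)) * P + (C c) ^ 2 from by ring,
        hCb2, hCc2, hCbc, one_mul]
    have hC8 : (C ((8 * ε)⁻¹) : MvPolynomial (Fin n) ℝ) * 2 = C ((4 * ε)⁻¹) := by
      rw [← map_ofNat C 2, ← map_mul]
      congr 1
      field_simp
      ring
    have hCneg : (C (-(4 * ε)⁻¹) : MvPolynomial (Fin n) ℝ) = -C ((4 * ε)⁻¹) := by
      rw [map_neg]
    rw [hSval, hexp, hψ, hCneg, show C ((8 * ε)⁻¹) * (2 * (Λ * hsq - P ^ 2))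
        = (C ((8 * ε)⁻¹) * 2) * (Λ * hsq - P ^ 2) from by ring, hC8]
    ring
  -- assemble membership
  have hgoal : f - C (r' - ε) = ψ * hsq + (Q + (sq1 + S)) := by
    have : f - C (r' - ε) = (P + Q) + C ε := by
      rw [hPQ, map_sub]; ring
    rw [this]; linear_combination -hkey
  rw [hgoal]
  refine Set.add_mem_add ?_ ?_
  · -- ideal part
    refine ⟨fun _ => ψ, fun i => ?_, by rw [Fin.sum_univ_one]⟩
    have hψdeg : ψ.totalDegree ≤ 4 * k := by
      have h1 := totalDegree_mul (C (-(4 * ε)⁻¹) : MvPolynomial (Fin n) ℝ) Λ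
      rw [totalDegree_C] at h1
      calc ψ.totalDegree = (C (-(4 * ε)⁻¹) * Λ).totalDegree := by rw [hψ]
        _ ≤ 4 * k := by omega
    calc (ψ * hsq).totalDegree ≤ ψ.totalDegree + hsq.totalDegree := totalDegree_mul _ _
      _ ≤ 2 * (2 * k + d) := by omega
  · -- QM part
    refine truncQM_add_sos (truncQM_mono g (by omega) hQ) ?_ ?_
    · exact isSOS_add (isSOS_sq _) (isSOS_sum _ _ fun i _ => isSOS_sum _ _ fun j _ => isSOS_sq _)
    · refine (totalDegree_add _ _).trans (max_le ?_ ?_)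
      · calc sq1.totalDegree ≤ 2 * (C b * P + C c).totalDegree := totalDegree_pow _ _
          _ ≤ 2 * max (C b * P).totalDegree (C c).totalDegree := by
              have := totalDegree_add (C b * P) (C c); omega
          _ ≤ 2 * (2 * k + d) := by
              have h1 := totalDegree_mul (C b) P
              rw [totalDegree_C] at *
              have : (C b * P).totalDegree ≤ P.totalDegree := by
                have := totalDegree_mul (C b) P
                rw [totalDegree_C] at this; omega
              omega
      · refine (totalDegree_finsetSum_le fun i _ => ?_)
        refine (totalDegree_finsetSum_le fun j _ => ?_)
        calc ((C e₀ * (φ' i * h j - φ' j * h i)) ^ 2).totalDegree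
            ≤ 2 * (C e₀ * (φ' i * h j - φ' j * h i)).totalDegree := totalDegree_pow _ _
          _ ≤ 2 * (φ' i * h j - φ' j * h i).totalDegree := by
              have := totalDegree_mul (C e₀) (φ' i * h j - φ' j * h i)
              rw [totalDegree_C] at this; omega
          _ ≤ 2 * max (φ' i * h j).totalDegree (φ' j * h i).totalDegree := by
              have := totalDegree_sub (φ' i * h j) (φ' j * h i); omega
          _ ≤ 2 * (2 * k + d) := by
              have h1 := totalDegree_mul (φ' i) (h j)
              have h2 := totalDegree_mul (φ' j) (h i)
              have := hφ'deg i; have := hφ'deg j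
              have := hDeg_le h i; have := hDeg_le h j
              omega

end Core

/-- With `h^{sq} = h₁² + ⋯ + h_{m₁}²`, if `I(K) = I(V_ℝ(h))`, then Lasserre's
hierarchy using the equalities `h` has finite convergence to `f_min` iff
the hierarchy for the single-equality problem `h^{sq} = 0, g ≥ 0` does. -/
theorem lasserre_finite_convergence_iff_single_square_equation
    {n m₁ m₂ : ℕ} (f : MvPolynomial (Fin n) ℝ)
    (h : Fin m₁ → MvPolynomial (Fin n) ℝ) (g : Fin m₂ → MvPolynomial (Fin n) ℝ)
    (hI : vanishIdeal (feasSet h g) = vanishIdeal (realVariety h)) :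
    (∃ N : ℕ, ∀ k ≥ N, lasserreBound f h g k = fMin f (feasSet h g)) ↔
      (∃ N : ℕ, ∀ k ≥ N,
        lasserreBound f (fun _ : Fin 1 => ∑ i, h i ^ 2) g k = fMin f (feasSet h g)) := by
  have Kfact := feasSet_sq h g
  constructor
  · rintro ⟨N, hN⟩
    refine ⟨2 * N + hDeg h, fun k hk => ?_⟩
    refine le_antisymm ?_ ?_
    · calc lasserreBound f (fun _ : Fin 1 => ∑ i, h i ^ 2) g k
          ≤ fMin f (feasSet (fun _ : Fin 1 => ∑ i, h i ^ 2) g) := lasserreBound_le_fMin _ _ _ _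
        _ = fMin f (feasSet h g) := by rw [Kfact]
    · refine le_of_forall_lt fun cval hc => ?_
      obtain ⟨r, hcr, hrlt⟩ := EReal.exists_between_coe_real hc
      rw [← hN N le_rfl] at hrlt
      obtain ⟨γ, hγmem, hrγ⟩ := lt_sSup_iff.mp hrlt
      obtain ⟨r', rfl, hmem'⟩ := hγmem
      have hε : 0 < r' - r := by
        rw [EReal.coe_lt_coe_iff] at hrγ; linarith
      have hcore := core_forward hε hmem'
      rw [show r' - (r' - r) = r from by ring] at hcore
      refine lt_of_lt_of_le hcr (le_sSup ?_)
      exact ⟨r, rfl, Set.add_subset_add (truncIdeal_mono _ (by omega)) (truncQM_mono _ (by omega))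
        hcore⟩
  · rintro ⟨N, hN⟩
    refine ⟨N + hDeg h, fun k hk => ?_⟩
    refine le_antisymm (lasserreBound_le_fMin _ _ _ _) ?_
    refine le_of_forall_lt fun cval hc => ?_
    obtain ⟨r, hcr, hrlt⟩ := EReal.exists_between_coe_real hc
    rw [← hN N le_rfl] at hrlt
    obtain ⟨γ, hγmem, hrγ⟩ := lt_sSup_iff.mp hrlt
    obtain ⟨r', rfl, hmem'⟩ := hγmem
    have hcore := core_backward hmem'
    refine lt_of_lt_of_le (lt_trans hcr hrγ) (le_sSup ?_)
    exact ⟨r', rfl, Set.add_subset_add (truncIdeal_mono _ (by omega)) (truncQM_mono _ (by omega))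
      hcore⟩
end

section
/- Let n ≥ 1, d ≥ 1, let h = x₁^{2d} + ⋯ + xₙ^{2d}, and let f ∈ ℝ[x₁,…,xₙ] satisfy f(0) = 0. Then there exists N ∈ ℕ such that for every ε > 0, f + ε ∈ ⟨h⟩_{2N} + Σ_{2N}. Consequently, for the problem of minimizing f subject to h(x) = 0, one has f_k = 0 = f_min for all k ≥ N. -/
open MvPolynomial Pointwise

/-- The set of SOS polynomials of degree at most `2k`. -/
def sigma2k {n : ℕ} (k : ℕ) : Set (MvPolynomial (Fin n) ℝ) :=
  {p | IsSOS p ∧ p.totalDegree ≤ 2 * k}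

/-- The `k`-th Lasserre bound for minimizing `f` subject to `h = 0`
(no inequality constraints). -/
noncomputable def lasserreEqBound {n m : ℕ} (f : MvPolynomial (Fin n) ℝ)
    (h : Fin m → MvPolynomial (Fin n) ℝ) (k : ℕ) : EReal :=
  sSup {γ : EReal | ∃ r : ℝ, γ = (r : EReal) ∧ f - C r ∈ truncIdeal h k + sigma2k k}

/-!
Every monomial `x^α` with `α ≠ 0` satisfies `±x^α + ε ∈ ⟨h⟩_{2N} + Σ_{2N}` for all `ε > 0`, with
`N` independent of `ε`; summing over the monomials of `f` gives the certificates for `f + ε`, and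
evaluating any certificate at the zero `0` of `h` gives `f_k ≤ f(0) = 0`.

Two facts give the monomial bound. If `g = q xᵢᵈ`, then
`-g² = -q² h + ∑_{j ≠ i} (q xⱼᵈ)²` lies in the cone. And the identity
`p + ε = ½ (ε (1 + p/ε)² + (ε² - p²)/ε)` turns a uniform bound for `-p²` into one for `±p`.
Applied to `p = x^α, x^{2α}, x^{4α}, …`, it reduces `x^α` to `-(x^{2^r α})²`, which is of the
first kind once `2^r αᵢ ≥ d`.
-/

theorem IsSumSq.map {R S : Type*} [NonAssocSemiring R] [NonAssocSemiring S] (f : R →+* S)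
    {s : R} (hs : IsSumSq s) : IsSumSq (f s) := by
  induction hs with
  | zero => simp
  | sq_add a _ ih => simpa using ih.sq_add (f a)

namespace Lasserre

variable {n : ℕ}

theorem isSOS_iff_isSumSq {p : MvPolynomial (Fin n) ℝ} : IsSOS p ↔ IsSumSq p := by
  constructor
  · rintro ⟨m, q, rfl⟩
    exact IsSumSq.sum_sq _ q
  · intro hp
    induction hp with
    | zero => exact ⟨0, Fin.elim0, by simp⟩
    | sq_add a _ ih =>
      obtain ⟨m, q, rfl⟩ := ih
      exact ⟨m + 1, Fin.cons a q, by simp [Fin.sum_univ_succ, sq]⟩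

theorem isSumSq_C {σ : Type*} {c : ℝ} (hc : 0 ≤ c) : IsSumSq (C c : MvPolynomial σ ℝ) :=
  IsSquare.isSumSq ⟨C √c, by rw [← map_mul, Real.mul_self_sqrt hc]⟩

theorem totalDegree_C_mul_le {σ : Type*} (c : ℝ) (p : MvPolynomial σ ℝ) :
    (C c * p).totalDegree ≤ p.totalDegree := by
  rw [C_mul']
  exact totalDegree_smul_le c p

def truncCone (H : MvPolynomial (Fin n) ℝ) (N : ℕ) : Set (MvPolynomial (Fin n) ℝ) :=
  truncIdeal (fun _ : Fin 1 => H) N + sigma2k N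

variable {H p q : MvPolynomial (Fin n) ℝ} {N M : ℕ}

theorem mem_truncCone_iff : p ∈ truncCone H N ↔ ∃ φ σ : MvPolynomial (Fin n) ℝ,
    (φ * H).totalDegree ≤ 2 * N ∧ IsSumSq σ ∧ σ.totalDegree ≤ 2 * N ∧ φ * H + σ = p := by
  simp only [truncCone, truncIdeal, sigma2k, Set.mem_add, Set.mem_ofPred_eq, isSOS_iff_isSumSq,
    Fin.sum_univ_one]
  constructor
  · rintro ⟨_, ⟨φ, hφ, rfl⟩, σ, ⟨hσ, hσN⟩, rfl⟩
    exact ⟨φ 0, σ, hφ 0, hσ, hσN, rfl⟩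
  · rintro ⟨φ, σ, hφ, hσ, hσN, rfl⟩
    exact ⟨_, ⟨fun _ => φ, fun _ => hφ, rfl⟩, σ, ⟨hσ, hσN⟩, rfl⟩

theorem truncCone_mono (hNM : N ≤ M) : truncCone H N ⊆ truncCone H M := by
  intro p hp
  obtain ⟨φ, σ, hφ, hσ, hσN, rfl⟩ := mem_truncCone_iff.mp hp
  exact mem_truncCone_iff.mpr ⟨φ, σ, hφ.trans (by omega), hσ, hσN.trans (by omega), rfl⟩

theorem mem_truncCone_of_isSumSq (hp : IsSumSq p) (hpN : p.totalDegree ≤ 2 * N) :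
    p ∈ truncCone H N :=
  mem_truncCone_iff.mpr ⟨0, p, by simp, hp, hpN, by simp⟩

theorem add_mem_truncCone (hp : p ∈ truncCone H N) (hq : q ∈ truncCone H N) :
    p + q ∈ truncCone H N := by
  obtain ⟨φ, σ, hφ, hσ, hσN, rfl⟩ := mem_truncCone_iff.mp hp
  obtain ⟨ψ, τ, hψ, hτ, hτN, rfl⟩ := mem_truncCone_iff.mp hq
  refine mem_truncCone_iff.mpr ⟨φ + ψ, σ + τ, ?_, hσ.add hτ, ?_, by ring⟩
  · rw [add_mul]
    exact (totalDegree_add _ _).trans (max_le hφ hψ)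
  · exact (totalDegree_add _ _).trans (max_le hσN hτN)

theorem C_mul_mem_truncCone {c : ℝ} (hc : 0 ≤ c) (hp : p ∈ truncCone H N) :
    C c * p ∈ truncCone H N := by
  obtain ⟨φ, σ, hφ, hσ, hσN, rfl⟩ := mem_truncCone_iff.mp hp
  refine mem_truncCone_iff.mpr ⟨C c * φ, C c * σ, ?_, (isSumSq_C hc).mul hσ, ?_, by ring⟩
  · rw [mul_assoc]
    exact (totalDegree_C_mul_le c _).trans hφ
  · exact (totalDegree_C_mul_le c σ).trans hσN

theorem C_mem_truncCone {c : ℝ} (hc : 0 ≤ c) : C c ∈ truncCone H N :=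
  mem_truncCone_of_isSumSq (isSumSq_C hc) (by simp [totalDegree_C])

def AlmostInCone (H p : MvPolynomial (Fin n) ℝ) : Prop :=
  ∃ N, ∀ ε : ℝ, 0 < ε → p + C ε ∈ truncCone H N

namespace AlmostInCone

theorem of_mem (hp : p ∈ truncCone H N) : AlmostInCone H p :=
  ⟨N, fun _ hε => add_mem_truncCone hp (C_mem_truncCone hε.le)⟩

theorem zero : AlmostInCone H 0 :=
  of_mem (N := 0) (mem_truncCone_of_isSumSq IsSumSq.zero (by simp))

theorem add (hp : AlmostInCone H p) (hq : AlmostInCone H q) : AlmostInCone H (p + q) := by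
  obtain ⟨N, hN⟩ := hp
  obtain ⟨M, hM⟩ := hq
  refine ⟨max N M, fun ε hε => ?_⟩
  have hsplit : p + q + C ε = (p + C (ε / 2)) + (q + C (ε / 2)) := by
    rw [add_add_add_comm, ← map_add, add_halves]
  rw [hsplit]
  exact add_mem_truncCone (truncCone_mono (le_max_left N M) (hN _ (half_pos hε)))
    (truncCone_mono (le_max_right N M) (hM _ (half_pos hε)))

theorem C_mul {c : ℝ} (hc : 0 ≤ c) (hp : AlmostInCone H p) : AlmostInCone H (C c * p) := by
  obtain ⟨N, hN⟩ := hp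
  refine ⟨N, fun ε hε => ?_⟩
  have hε' : 0 < ε / (c + 1) := by positivity
  have hsplit : C c * p + C ε = C c * (p + C (ε / (c + 1))) + C (ε / (c + 1)) := by
    rw [mul_add, add_assoc, ← map_mul, ← map_add]
    congr 2
    field_simp
  rw [hsplit]
  exact add_mem_truncCone (C_mul_mem_truncCone hc (hN _ hε')) (C_mem_truncCone hε'.le)

theorem of_neg_mul_self (hu : AlmostInCone H (-(p * p))) : AlmostInCone H p := by
  obtain ⟨N, hN⟩ := hu
  refine ⟨max N p.totalDegree, fun ε hε => ?_⟩
  have hsplit : p + C ε =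
      C (1 / 2) * (C ε * (1 + C ε⁻¹ * p) ^ 2 + C ε⁻¹ * (-(p * p) + C (ε ^ 2))) := by
    have h1 : C ε * C ε⁻¹ = (1 : MvPolynomial (Fin n) ℝ) := by
      rw [← map_mul, mul_inv_cancel₀ hε.ne', map_one]
    have h2 : C (1 / 2) * 2 = (1 : MvPolynomial (Fin n) ℝ) := by
      rw [← map_ofNat C, ← map_mul]; norm_num
    have h3 : C (ε ^ 2) = (C ε : MvPolynomial (Fin n) ℝ) ^ 2 := map_pow C ε 2
    linear_combination (-(C ε + p)) * h2 - C (1 / 2) * (C ε + 2 * p + C ε⁻¹ * p ^ 2) * h1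
      - C (1 / 2) * C ε⁻¹ * h3
  have hsq : (1 + C ε⁻¹ * p).totalDegree ≤ p.totalDegree :=
    (totalDegree_add _ _).trans (max_le (by simp) (totalDegree_C_mul_le _ _))
  have hsq_deg : (C ε * (1 + C ε⁻¹ * p) ^ 2).totalDegree ≤ 2 * max N p.totalDegree :=
    (totalDegree_C_mul_le _ _).trans ((totalDegree_pow _ 2).trans (by omega))
  rw [hsplit]
  refine C_mul_mem_truncCone (by norm_num) (add_mem_truncCone ?_ ?_)
  · exact mem_truncCone_of_isSumSq ((isSumSq_C hε.le).mul (IsSquare.sq _).isSumSq) hsq_deg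
  · exact C_mul_mem_truncCone (inv_nonneg.mpr hε.le)
      (truncCone_mono (le_max_left _ _) (hN _ (by positivity)))

theorem of_neg_pow_two_pow (r : ℕ) (hp : AlmostInCone H (-p ^ 2 ^ (r + 1))) :
    AlmostInCone H (-p ^ 2) := by
  induction r generalizing p with
  | zero => simpa using hp
  | succ r ih =>
    have hsq : AlmostInCone H (-(p ^ 2) ^ 2) := ih (by rwa [← pow_mul, ← pow_succ'])
    exact of_neg_mul_self (by rwa [neg_mul_neg, ← sq])

end AlmostInCone

def almostLineality (H : MvPolynomial (Fin n) ℝ) : Submodule ℝ (MvPolynomial (Fin n) ℝ) where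
  carrier := {p | AlmostInCone H p ∧ AlmostInCone H (-p)}
  zero_mem' := ⟨.zero, by simpa using AlmostInCone.zero⟩
  add_mem' hp hq := ⟨hp.1.add hq.1, by rw [neg_add]; exact hp.2.add hq.2⟩
  smul_mem' c p hp := by
    simp only [Set.mem_ofPred_eq, smul_eq_C_mul]
    rcases le_total 0 c with hc | hc
    · exact ⟨hp.1.C_mul hc, by simpa using hp.2.C_mul hc⟩
    · have h1 := hp.1.C_mul (neg_nonneg.mpr hc)
      have h2 := hp.2.C_mul (neg_nonneg.mpr hc)
      simp only [map_neg, neg_mul, mul_neg, neg_neg] at h1 h2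
      exact ⟨h2, h1⟩

theorem mem_almostLineality_of_neg_sq (hp : AlmostInCone H (-p ^ 2)) : p ∈ almostLineality H :=
  ⟨.of_neg_mul_self (by rwa [← sq]), .of_neg_mul_self (by rwa [neg_mul_neg, ← sq])⟩

theorem neg_sq_mul_X_pow_mem_truncCone {d : ℕ} (q : MvPolynomial (Fin n) ℝ) (i : Fin n) :
    -(q * X i ^ d) ^ 2 ∈ truncCone (∑ j, X j ^ (2 * d)) (q.totalDegree + d) := by
  have hdeg : ∀ j, (q * X j ^ d).totalDegree ≤ q.totalDegree + d := fun j =>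
    (totalDegree_mul _ _).trans (by rw [totalDegree_X_pow])
  have hH : (∑ j, X j ^ (2 * d) : MvPolynomial (Fin n) ℝ).totalDegree ≤ 2 * d :=
    totalDegree_finsetSum_le fun j _ => (totalDegree_X_pow j _).le
  refine mem_truncCone_iff.mpr ⟨-q ^ 2, ∑ j ∈ Finset.univ.erase i, (q * X j ^ d) ^ 2,
    ?_, IsSumSq.sum_sq _ _, ?_, ?_⟩
  · have hq := totalDegree_pow q 2
    rw [neg_mul, totalDegree_neg]
    exact (totalDegree_mul _ _).trans (by omega)
  · exact totalDegree_finsetSum_le fun j _ =>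
      (totalDegree_pow _ 2).trans (by have := hdeg j; omega)
  · rw [← Finset.add_sum_erase _ _ (Finset.mem_univ i)]
    simp only [mul_pow, ← pow_mul, mul_comm d 2, ← Finset.mul_sum]
    ring

theorem monomial_mem_almostLineality {d : ℕ} {α : Fin n →₀ ℕ} (hα : α ≠ 0) :
    monomial α (1 : ℝ) ∈ almostLineality (∑ j, X j ^ (2 * d)) := by
  obtain ⟨i, hi⟩ : ∃ i, α i ≠ 0 := by simpa [Finsupp.ext_iff] using hα
  have hle : Finsupp.single i d ≤ 2 ^ d • α := by
    rw [Finsupp.single_le_iff, Finsupp.smul_apply, smul_eq_mul]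
    exact Nat.lt_two_pow_self.le.trans (Nat.le_mul_of_pos_right _ (Nat.pos_of_ne_zero hi))
  have hpow : monomial α (1 : ℝ) ^ 2 ^ (d + 1)
      = (monomial (2 ^ d • α - Finsupp.single i d) 1 * X i ^ d) ^ 2 := by
    rw [X_pow_eq_monomial, monomial_mul, tsub_add_cancel_of_le hle, monomial_pow, monomial_pow,
      pow_succ', mul_smul]
    norm_num
  refine mem_almostLineality_of_neg_sq (.of_neg_pow_two_pow d ?_)
  rw [hpow]
  exact .of_mem (neg_sq_mul_X_pow_mem_truncCone _ i)

theorem mem_almostLineality_of_constantCoeff_eq_zero {d : ℕ} {f : MvPolynomial (Fin n) ℝ}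
    (hf : constantCoeff f = 0) : f ∈ almostLineality (∑ j, X j ^ (2 * d)) := by
  rw [f.as_sum]
  refine Submodule.sum_mem _ fun α hα => ?_
  have hα0 : α ≠ 0 := by
    rintro rfl
    exact mem_support_iff.mp hα (by rwa [constantCoeff_eq] at hf)
  have hsmul : monomial α (coeff α f) = coeff α f • monomial α 1 := by
    rw [smul_monomial, smul_eq_mul, mul_one]
  rw [hsmul]
  exact Submodule.smul_mem _ _ (monomial_mem_almostLineality hα0)

theorem lasserreEqBound_le_eval {m : ℕ} (f : MvPolynomial (Fin n) ℝ)
    (h : Fin m → MvPolynomial (Fin n) ℝ) (k : ℕ) {x : Fin n → ℝ} (hx : x ∈ realVariety h) :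
    lasserreEqBound f h k ≤ eval x f := by
  refine sSup_le ?_
  rintro _ ⟨r, rfl, _, ⟨φ, -, rfl⟩, σ, ⟨hσ, -⟩, hcert⟩
  have hσx : eval x σ = eval x f - r := by
    simpa [hx _] using congrArg (eval x) hcert
  have := (isSOS_iff_isSumSq.mp hσ |>.map (eval x)).nonneg
  exact EReal.coe_le_coe_iff.mpr (by linarith)

theorem nonneg_lasserreEqBound {m : ℕ} {f : MvPolynomial (Fin n) ℝ}
    {h : Fin m → MvPolynomial (Fin n) ℝ} {k : ℕ}
    (hf : ∀ ε : ℝ, 0 < ε → f + C ε ∈ truncIdeal h k + sigma2k k) :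
    0 ≤ lasserreEqBound f h k := by
  refine EReal.ge_of_forall_gt_iff_ge.mp fun r hr => le_sSup ⟨r, rfl, ?_⟩
  have hr' : r < 0 := by exact_mod_cast hr
  simpa [sub_eq_add_neg] using hf (-r) (neg_pos.mpr hr')

end Lasserre

open Lasserre in
theorem lasserre_finite_convergence_sum_even_powers_general
    {n d : ℕ} (hd : 1 ≤ d)
    (f : MvPolynomial (Fin n) ℝ) (hf0 : eval (0 : Fin n → ℝ) f = 0) :
    ∃ N : ℕ,
      (∀ ε : ℝ, 0 < ε →
        f + C ε ∈ truncIdeal (fun _ : Fin 1 => ∑ i : Fin n, X i ^ (2 * d)) N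
          + sigma2k N) ∧
      ∀ k ≥ N,
        lasserreEqBound f (fun _ : Fin 1 => ∑ i : Fin n, X i ^ (2 * d)) k
          = (0 : EReal) := by
  obtain ⟨N, hN⟩ := (mem_almostLineality_of_constantCoeff_eq_zero (d := d)
    (by rwa [eval_zero] at hf0)).1
  refine ⟨N, hN, fun k hk => le_antisymm ?_ (nonneg_lasserreEqBound fun ε hε =>
    truncCone_mono hk (hN ε hε))⟩
  have hzero : (0 : Fin n → ℝ) ∈ realVariety (fun _ : Fin 1 => ∑ i : Fin n, X i ^ (2 * d)) :=
    fun _ => by simp [zero_pow (by omega : 2 * d ≠ 0)]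
  exact (lasserreEqBound_le_eval f _ k hzero).trans_eq (by rw [hf0, EReal.coe_zero])

/-- Let `h = x₁^{2d} + ⋯ + xₙ^{2d}` and `f(0) = 0`. Then there is `N` with
`f + ε ∈ ⟨h⟩_{2N} + Σ_{2N}` for every `ε > 0`; consequently for the problem of
minimizing `f` subject to `h = 0`, `f_k = 0 = f_min` for all `k ≥ N`. -/
theorem lasserre_finite_convergence_sum_even_powers
    {n d : ℕ} (hn : 0 < n) (hd : 1 ≤ d)
    (f : MvPolynomial (Fin n) ℝ) (hf0 : eval (0 : Fin n → ℝ) f = 0) :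
    ∃ N : ℕ,
      (∀ ε : ℝ, 0 < ε →
        f + C ε ∈ truncIdeal (fun _ : Fin 1 => ∑ i : Fin n, X i ^ (2 * d)) N
          + sigma2k N) ∧
      ∀ k ≥ N,
        lasserreEqBound f (fun _ : Fin 1 => ∑ i : Fin n, X i ^ (2 * d)) k
          = (0 : EReal) :=
  lasserre_finite_convergence_sum_even_powers_general hd f hf0
end

section
/- For all integers n ≥ 1 and d ≥ 1, there exists a real number λ > 0 such that the polynomial λ·(t₁^{2d} + t₂^{2d} + ⋯ + tₙ^{2d}) − (t₁ + t₂ + ⋯ + tₙ)^{2d} is a sum of squares of polynomials in ℝ[t₁,…,tₙ]. -/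
open MvPolynomial

/-!
With `S = ∑ xᵢ`, `Aₖ = ∑ xᵢ^(2k)` and `m` the number of variables, the bound
`S^(2k) ≼ (2m²)^k Aₖ` (where `≼` means the difference is a sum of squares) follows by induction
on `k` from two facts:
`S² ≼ m A₁` (Lagrange's identity) and `Aₖ A₁ ≼ 2m Aₖ₊₁`, obtained by summing the two-variable
inequality `a^(2k) b² ≼ a^(2k+2) + b^(2k+2)` over all pairs of variables.
-/

open Finset

theorem IsSumSq.isSOS {n : ℕ} {p : MvPolynomial (Fin n) ℝ} (h : IsSumSq p) : IsSOS p := by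
  induction h with
  | zero => exact ⟨0, Fin.elim0, by simp⟩
  | sq_add a _ ih =>
    obtain ⟨m, q, rfl⟩ := ih
    exact ⟨m + 1, Fin.cons a q, by simp [Fin.sum_univ_succ, sq]⟩

section CommRing

variable {R : Type*} [CommRing R]

theorem isSumSq_pow_add_pow_sub_pow_mul_sq (k : ℕ) (a b : R) :
    IsSumSq (a ^ (2 * k + 2) + b ^ (2 * k + 2) - a ^ (2 * k) * b ^ 2) := by
  induction k with
  | zero => simpa using (IsSquare.sq a).isSumSq
  | succ k ih =>
    have h : a ^ (2 * (k + 1) + 2) + b ^ (2 * (k + 1) + 2) - a ^ (2 * (k + 1)) * b ^ 2 =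
        (a ^ (k + 2) - a ^ k * b ^ 2) ^ 2 +
          b ^ 2 * (a ^ (2 * k + 2) + b ^ (2 * k + 2) - a ^ (2 * k) * b ^ 2) := by
      ring
    rw [h]
    exact (IsSquare.sq _).isSumSq.add ((IsSquare.sq b).isSumSq.mul ih)

variable {ι : Type*} (s : Finset ι) (x : ι → R)

theorem isSumSq_card_mul_sum_sq_sub_sq_sum :
    IsSumSq (#s * ∑ i ∈ s, x i ^ 2 - (∑ i ∈ s, x i) ^ 2) := by
  induction s using Finset.cons_induction with
  | empty => simp
  | cons j s hj ih =>
    have h : (#(s.cons j hj) : R) * ∑ i ∈ s.cons j hj, x i ^ 2 - (∑ i ∈ s.cons j hj, x i) ^ 2 =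
        (#s * ∑ i ∈ s, x i ^ 2 - (∑ i ∈ s, x i) ^ 2) + ∑ i ∈ s, (x i - x j) ^ 2 := by
      simp only [card_cons, sum_cons, sub_sq, sum_add_distrib, sum_sub_distrib, ← sum_mul,
        ← mul_sum, sum_const, nsmul_eq_mul]
      push_cast
      ring
    rw [h]
    exact ih.add (IsSumSq.sum_sq _ _)

theorem isSumSq_two_card_mul_sum_pow_sub_sum_pow_mul_sum_sq (k : ℕ) :
    IsSumSq (2 * #s * ∑ i ∈ s, x i ^ (2 * k + 2) -
      (∑ i ∈ s, x i ^ (2 * k)) * ∑ i ∈ s, x i ^ 2) := by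
  have h : 2 * #s * ∑ i ∈ s, x i ^ (2 * k + 2) - (∑ i ∈ s, x i ^ (2 * k)) * ∑ i ∈ s, x i ^ 2 =
      ∑ i ∈ s, ∑ j ∈ s, (x i ^ (2 * k + 2) + x j ^ (2 * k + 2) - x i ^ (2 * k) * x j ^ 2) := by
    simp only [sum_add_distrib, sum_sub_distrib, sum_const, nsmul_eq_mul, ← mul_sum, ← sum_mul]
    ring
  rw [h]
  exact IsSumSq.sum fun i _ ↦ IsSumSq.sum fun j _ ↦
    isSumSq_pow_add_pow_sub_pow_mul_sq k (x i) (x j)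

theorem isSumSq_sum_pow_two_mul (k : ℕ) : IsSumSq (∑ i ∈ s, x i ^ (2 * k)) :=
  IsSumSq.sum fun i _ ↦ ((even_two_mul k).isSquare_pow (x i)).isSumSq

theorem isSumSq_pow_mul_sum_pow_sub_pow_sum (hs : s.Nonempty) (d : ℕ) :
    IsSumSq ((2 * (#s : R) ^ 2) ^ d * ∑ i ∈ s, x i ^ (2 * d) - (∑ i ∈ s, x i) ^ (2 * d)) := by
  induction d with
  | zero =>
    have h : ((#s - 1 : ℕ) : R) = #s - 1 := by rw [Nat.cast_sub hs.card_pos, Nat.cast_one]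
    simp [← h]
  | succ d ih =>
    have hc : IsSumSq ((2 * (#s : R) ^ 2) ^ d) := by
      exact_mod_cast IsSumSq.natCast ((2 * #s ^ 2) ^ d)
    set c : R := (2 * (#s : R) ^ 2) ^ d
    have h : (2 * (#s : R) ^ 2) ^ (d + 1) * ∑ i ∈ s, x i ^ (2 * (d + 1)) -
        (∑ i ∈ s, x i) ^ (2 * (d + 1)) =
        c * #s * (2 * #s * ∑ i ∈ s, x i ^ (2 * d + 2) -
            (∑ i ∈ s, x i ^ (2 * d)) * ∑ i ∈ s, x i ^ 2) +
          c * (∑ i ∈ s, x i ^ (2 * d)) * (#s * ∑ i ∈ s, x i ^ 2 - (∑ i ∈ s, x i) ^ 2) +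
          (∑ i ∈ s, x i) ^ 2 * (c * ∑ i ∈ s, x i ^ (2 * d) - (∑ i ∈ s, x i) ^ (2 * d)) := by
      rw [show 2 * (d + 1) = 2 * d + 2 by ring]
      ring
    rw [h]
    have hA := isSumSq_sum_pow_two_mul s x d
    have hAB := isSumSq_two_card_mul_sum_pow_sub_sum_pow_mul_sum_sq s x d
    have hS := isSumSq_card_mul_sum_sq_sub_sq_sum s x
    exact (((hc.mul (IsSumSq.natCast _)).mul hAB).add ((hc.mul hA).mul hS)).add
      ((IsSquare.sq _).isSumSq.mul ih)

end CommRing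

theorem exists_lambda_sos_dominating_power_of_sum_general
    {n d : ℕ} (hn : 1 ≤ n) :
    ∃ lam : ℝ, 0 < lam ∧
      IsSOS (C lam * (∑ i : Fin n, X i ^ (2 * d)) - (∑ i : Fin n, X i) ^ (2 * d)) := by
  have hn' : (0 : ℝ) < n := by exact_mod_cast hn
  refine ⟨(2 * n ^ 2) ^ d, by positivity, IsSumSq.isSOS ?_⟩
  have hs : (univ : Finset (Fin n)).Nonempty := univ_nonempty_iff.2 ⟨⟨0, hn⟩⟩
  simpa [map_ofNat C] using
    isSumSq_pow_mul_sum_pow_sub_pow_sum univ (X : Fin n → MvPolynomial (Fin n) ℝ) hs d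

/-- For all `n ≥ 1` and `d ≥ 1`, there is `λ > 0` such that
`λ·(t₁^{2d} + ⋯ + tₙ^{2d}) − (t₁ + ⋯ + tₙ)^{2d}` is a sum of squares. -/
theorem exists_lambda_sos_dominating_power_of_sum
    {n d : ℕ} (hn : 1 ≤ n) (hd : 1 ≤ d) :
    ∃ lam : ℝ, 0 < lam ∧
      IsSOS (C lam * (∑ i : Fin n, X i ^ (2 * d)) - (∑ i : Fin n, X i) ^ (2 * d)) :=
  exists_lambda_sos_dominating_power_of_sum_general hn
end
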